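/- Let (P, μ) be a measure space, and let x : ℝ → P → ℝ be a parameterized family of real-valued functions. Define the partition function Z(θ) = ∫ exp(x(θ, p)) dμ(p). Suppose there is a parameter value θ₀ and a radius ε > 0 such that: (i) for each θ in the ball of radius ε around θ₀, the function p ↦ exp(x(θ, p)) is μ-integrable; (ii) for μ-almost every p, the map θ ↦ x(θ, p) is differentiable at every θ in that ball with derivative ∂x/∂θ(θ, p); (iii) there is a μ-integrable function g : P → ℝ bounding |∂x/∂θ(θ, p) · exp(x(θ, p))| ≤ g(p) for all θ in the ball and μ-almost every p; (iv) the map p ↦ ∂x/∂θ(θ₀, p) · exp(x(θ₀, p)) is μ-measurable; and (v) Z(θ₀) > 0. Then the function θ ↦ log Z(θ) is differentiable at θ₀, and its derivative equals ∫ ∂x/∂θ(θ₀, p) · q̂(p) dμ(p), where q̂(p) = exp(x(θ₀, p)) / Z(θ₀) is the normalized model density. -/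

import Mathlib

/-!
Differentiating `Z θ = ∫ exp (x θ p) dμ` under the integral sign is dominated convergence, but
the hypothesis bounds `∂x/∂θ · exp x` for each `θ` only outside a null set depending on `θ`,
while dominated differentiation needs, for almost every `p`, a bound along the whole segment.
The quantifiers are exchanged by Fubini: a family that is continuous in `θ` and measurable in
`p` is jointly measurable (Carathéodory), and so is its `θ`-derivative, a limit of difference
quotients. For almost every `p` the derivative is then bounded for almost every `θ`, which by the
fundamental theorem of calculus still makes `θ ↦ exp (x θ p)` Lipschitz with constant `g p`.
The chain rule for `log` finishes the proof.
-/

open MeasureTheory Real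

open Filter Topology Set TopologicalSpace
open scoped NNReal Interval

theorem sigmaFinite_of_integrable_of_ae_ne_zero {α E : Type*} [MeasurableSpace α]
    [NormedAddCommGroup E] {μ : Measure α} {f : α → E} (hf : Integrable f μ)
    (hne : ∀ᵐ a ∂μ, f a ≠ 0) : SigmaFinite μ := by
  obtain ⟨t, -, hft, ht⟩ := hf.aefinStronglyMeasurable.exists_set_sigmaFinite
  have hcompl : μ.restrict tᶜ = 0 :=
    ae_eq_bot.mp <| eventually_false_iff_eq_bot.mp <|
      (hft.and (ae_restrict_of_ae hne)).mono fun _ h => h.2 h.1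
  rwa [← Measure.restrict_eq_self_of_ae_mem
    (mem_ae_iff.mpr (Measure.restrict_eq_zero.mp hcompl))]

theorem ae_ae_comm₀ {α β : Type*} [MeasurableSpace α] [MeasurableSpace β] {μ : Measure α}
    {ν : Measure β} [SFinite μ] [SFinite ν] {p : α → β → Prop}
    (hp : NullMeasurableSet {z : α × β | p z.1 z.2} (μ.prod ν))
    (h : ∀ᵐ x ∂μ, ∀ᵐ y ∂ν, p x y) : ∀ᵐ y ∂ν, ∀ᵐ x ∂μ, p x y := by
  have hs := hp.toMeasurable_ae_eq.mem_iff
  have hmem : ∀ᵐ z ∂μ.prod ν, z ∈ toMeasurable (μ.prod ν) {z | p z.1 z.2} := by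
    refine (Measure.ae_prod_mem_iff_ae_ae_mem (measurableSet_toMeasurable _ _)).2 ?_
    filter_upwards [h, Measure.ae_ae_of_ae_prod hs] with x hx hx'
    filter_upwards [hx, hx'] with y hy hy' using hy'.2 hy
  have hprod : ∀ᵐ z ∂μ.prod ν, p z.1 z.2 := by
    filter_upwards [hmem, hs] with z hz hz' using hz'.1 hz
  exact Measure.ae_ae_of_ae_prod
    (Measure.measurePreserving_swap.quasiMeasurePreserving.ae hprod)

theorem aestronglyMeasurable_uncurry_of_ae_continuous {ι α E : Type*} [TopologicalSpace ι]
    [MetrizableSpace ι] [SecondCountableTopology ι] [MeasurableSpace ι]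
    [OpensMeasurableSpace ι] [MeasurableSpace α] [TopologicalSpace E] [PseudoMetrizableSpace E]
    [Zero E]
    (ν : Measure ι) {μ : Measure α} [SFinite μ] {u : ι → α → E}
    (hcont : ∀ᵐ a ∂μ, Continuous fun i => u i a)
    (hmeas : ∀ i, AEStronglyMeasurable (u i) μ) :
    AEStronglyMeasurable (Function.uncurry u) (ν.prod μ) := by
  obtain ⟨D, hDc, hD⟩ := exists_countable_dense ι
  have : Countable D := hDc.to_subtype
  set N := toMeasurable μ
    {a | ¬ ((Continuous fun i => u i a) ∧ ∀ i : D, u i a = (hmeas i).mk _ a)}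
  have hgood : ∀ a ∉ N, (Continuous fun i => u i a) ∧ ∀ i : D, u i a = (hmeas i).mk _ a :=
    fun a ha => by_contra fun h => ha (subset_toMeasurable _ _ h)
  have hN : μ N = 0 := by
    rw [measure_toMeasurable]
    exact ae_iff.mp (hcont.and (ae_all_iff.2 fun i => (hmeas i).ae_eq_mk))
  set v : ι → α → E := fun i => Nᶜ.indicator (u i)
  have hv_cont : ∀ a, Continuous fun i => v i a := by
    intro a
    by_cases ha : a ∈ N
    · simp [v, ha, continuous_const]
    · simpa [v, ha] using (hgood a ha).1
  have hv_meas : ∀ i, StronglyMeasurable (v i) := by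
    intro i
    obtain ⟨d, hdD, hdi⟩ := mem_closure_iff_seq_limit.mp (hD.closure_eq.symm ▸ mem_univ i)
    refine stronglyMeasurable_of_tendsto atTop (f := fun n => v (d n)) (fun n => ?_)
      (tendsto_pi_nhds.2 fun a => ((hv_cont a).tendsto i).comp hdi)
    have hvd : v (d n) = Nᶜ.indicator ((hmeas (d n)).mk _) := by
      ext a
      by_cases ha : a ∈ N
      · simp [v, ha]
      · simp [v, ha, (hgood a ha).2 ⟨d n, hdD n⟩]
    rw [hvd]
    exact (hmeas _).stronglyMeasurable_mk.indicator (measurableSet_toMeasurable _ _).compl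
  refine ⟨Function.uncurry v,
    stronglyMeasurable_uncurry_of_continuous_of_stronglyMeasurable hv_cont hv_meas, ?_⟩
  filter_upwards
    [Measure.quasiMeasurePreserving_snd.ae (measure_eq_zero_iff_ae_notMem.mp hN)] with q hq
  exact (indicator_of_mem (mem_compl hq) _).symm

theorem aestronglyMeasurable_of_hasDerivAt {α E : Type*} [MeasurableSpace α]
    [NormedAddCommGroup E] [NormedSpace ℝ E] {μ : Measure α} {F : α → ℝ → E} {F' : α → E}
    {τ : α → ℝ} (hF : ∀ h, AEStronglyMeasurable (fun a => F a (τ a + h)) μ)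
    (hd : ∀ᵐ a ∂μ, HasDerivAt (F a) (F' a) (τ a)) : AEStronglyMeasurable F' μ := by
  have hh : Tendsto (fun n : ℕ => 1 / ((n : ℝ) + 1)) atTop (𝓝[>] 0) :=
    tendsto_nhdsWithin_iff.2 ⟨tendsto_one_div_add_atTop_nhds_zero_nat,
      Eventually.of_forall fun n => mem_Ioi.2 (by positivity)⟩
  refine aestronglyMeasurable_of_tendsto_ae atTop
    (f := fun (n : ℕ) a =>
      (1 / ((n : ℝ) + 1))⁻¹ • (F a (τ a + 1 / (n + 1)) - F a (τ a)))
    (fun n => ((hF _).sub (by simpa using hF 0)).const_smul _) ?_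
  filter_upwards [hd] with a ha
  exact ha.tendsto_slope_zero_right.comp hh

theorem aestronglyMeasurable_uncurry_of_hasDerivAt {α E : Type*} [MeasurableSpace α]
    [NormedAddCommGroup E] [NormedSpace ℝ E] {μ : Measure α} [SFinite μ] {G F' : ℝ → α → E}
    {s : Set ℝ} (hs : MeasurableSet s)
    (hG : AEStronglyMeasurable (Function.uncurry G) (volume.prod μ))
    (hd : ∀ᵐ a ∂μ, ∀ t ∈ s, HasDerivAt (G · a) (F' t a) t) :
    AEStronglyMeasurable (Function.uncurry F') ((volume.restrict s).prod μ) := by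
  refine aestronglyMeasurable_of_hasDerivAt (F := fun q t => G t q.2) (τ := Prod.fst)
    (fun h => ?_) ?_
  · have hshift :
        MeasurePreserving (Prod.map (· + h) id) (volume.prod μ) (volume.prod μ) :=
      (measurePreserving_add_right volume h).prod (MeasurePreserving.id μ)
    exact (hG.comp_measurePreserving hshift).mono_ac
      (Measure.restrict_le_self.absolutelyContinuous.prod Measure.AbsolutelyContinuous.rfl)
  · filter_upwards [Measure.quasiMeasurePreserving_fst.ae (ae_restrict_mem hs),
      Measure.quasiMeasurePreserving_snd.ae hd] with q hq hq'
    exact hq' q.1 hq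

theorem lipschitzOnWith_of_hasDerivAt_of_ae_norm_le {E : Type*} [NormedAddCommGroup E]
    [NormedSpace ℝ E] [CompleteSpace E] {f f' : ℝ → E} {s : Set ℝ} {C : ℝ≥0}
    (hs : s.OrdConnected) (hf : ∀ t ∈ s, HasDerivAt f (f' t) t)
    (hC : ∀ᵐ t ∂volume.restrict s, ‖f' t‖ ≤ C) : LipschitzOnWith C f s := by
  refine LipschitzOnWith.of_dist_le_mul fun a ha b hb => ?_
  have hsub : uIcc b a ⊆ s := hs.uIcc_subset hb ha
  have hC' : ∀ᵐ t, t ∈ Ι b a → ‖f' t‖ ≤ C :=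
    ((ae_restrict_iff' hs.measurableSet).1 hC).mono fun t ht htI =>
      ht (hsub (uIoc_subset_uIcc htI))
  have hmeas : AEStronglyMeasurable f' (volume.restrict (Ι b a)) :=
    (stronglyMeasurable_deriv f).aestronglyMeasurable.congr <|
      (ae_restrict_mem measurableSet_uIoc).mono fun t ht =>
        (hf t (hsub (uIoc_subset_uIcc ht))).deriv
  have hint : IntervalIntegrable f' volume b a :=
    (intervalIntegrable_const (c := (C : ℝ))).mono_fun' hmeas
      ((ae_restrict_iff' measurableSet_uIoc).2 hC')
  rw [dist_eq_norm, Real.dist_eq,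
    ← intervalIntegral.integral_eq_sub_of_hasDerivAt (fun t ht => hf t (hsub ht)) hint]
  exact intervalIntegral.norm_integral_le_of_norm_le_const_ae hC'

theorem ae_lipschitzOnWith_of_forall_ae_norm_deriv_le {α E : Type*} [MeasurableSpace α]
    [NormedAddCommGroup E] [NormedSpace ℝ E] [CompleteSpace E] {μ : Measure α} [SFinite μ]
    {F F' : ℝ → α → E} {s : Set ℝ} {bound : α → ℝ} (hs : s.OrdConnected)
    (hF : AEStronglyMeasurable (Function.uncurry F) (volume.prod μ))
    (hF' : ∀ᵐ a ∂μ, ∀ t ∈ s, HasDerivAt (F · a) (F' t a) t)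
    (h_bound : ∀ t ∈ s, ∀ᵐ a ∂μ, ‖F' t a‖ ≤ bound a) (bound_meas : AEMeasurable bound μ) :
    ∀ᵐ a ∂μ, LipschitzOnWith (Real.nnabs (bound a)) (F · a) s := by
  have hF'_meas :
      AEStronglyMeasurable (Function.uncurry F') ((volume.restrict s).prod μ) :=
    aestronglyMeasurable_uncurry_of_hasDerivAt hs.measurableSet hF hF'
  have h_bound' : ∀ᵐ a ∂μ, ∀ᵐ t ∂volume.restrict s, ‖F' t a‖ ≤ bound a :=
    ae_ae_comm₀ (nullMeasurableSet_le hF'_meas.norm.aemeasurable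
      (bound_meas.comp_quasiMeasurePreserving Measure.quasiMeasurePreserving_snd))
      (ae_restrict_of_forall_mem hs.measurableSet h_bound)
  filter_upwards [hF', h_bound'] with a ha ha'
  refine lipschitzOnWith_of_hasDerivAt_of_ae_norm_le hs ha (ha'.mono fun t ht => ?_)
  rw [Real.coe_nnabs]
  exact ht.trans (le_abs_self _)

theorem hasDerivAt_integral_of_dominated_loc_of_forall_ae_deriv_le {α E : Type*}
    [MeasurableSpace α] [NormedAddCommGroup E] [NormedSpace ℝ E] [CompleteSpace E]
    {μ : Measure α} [SFinite μ] {F F' : ℝ → α → E} {θ₀ ε : ℝ} {bound : α → ℝ} (hε : 0 < ε)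
    (hF_meas : ∀ θ ∈ Metric.ball θ₀ ε, AEStronglyMeasurable (F θ) μ)
    (hF_int : Integrable (F θ₀) μ)
    (hF' : ∀ᵐ a ∂μ, ∀ θ ∈ Metric.ball θ₀ ε, HasDerivAt (F · a) (F' θ a) θ)
    (h_bound : ∀ θ ∈ Metric.ball θ₀ ε, ∀ᵐ a ∂μ, ‖F' θ a‖ ≤ bound a)
    (bound_integrable : Integrable bound μ) :
    HasDerivAt (fun θ => ∫ a, F θ a ∂μ) (∫ a, F' θ₀ a ∂μ) θ₀ := by
  set I := Ioo (θ₀ - ε / 2) (θ₀ + ε / 2)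
  have hab : θ₀ - ε / 2 ≤ θ₀ + ε / 2 := by linarith
  have hθ₀ : θ₀ ∈ I := ⟨by linarith, by linarith⟩
  have hIcc : Icc (θ₀ - ε / 2) (θ₀ + ε / 2) ⊆ Metric.ball θ₀ ε := by
    rw [Real.ball_eq_Ioo]
    exact Icc_subset_Ioo (by linarith) (by linarith)
  -- `F` frozen outside a compact interval inside the ball, hence continuous in `θ` on all of `ℝ`.
  set G : ℝ → α → E := fun t => F (projIcc _ _ hab t)
  have hGF : ∀ t ∈ I, G t = F t := fun t ht => by
    simp only [G, projIcc_of_mem _ (Ioo_subset_Icc_self ht)]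
  have hG_meas : ∀ t, AEStronglyMeasurable (G t) μ :=
    fun t => hF_meas _ (hIcc (projIcc _ _ hab t).2)
  have hG : AEStronglyMeasurable (Function.uncurry G) (volume.prod μ) := by
    refine aestronglyMeasurable_uncurry_of_ae_continuous volume ?_ hG_meas
    filter_upwards [hF'] with a ha
    exact ContinuousOn.comp_continuous
      (fun θ hθ => (ha θ hθ).continuousAt.continuousWithinAt)
      (continuous_subtype_val.comp continuous_projIcc) fun t => hIcc (projIcc _ _ hab t).2
  have hG' : ∀ᵐ a ∂μ, ∀ t ∈ I, HasDerivAt (G · a) (F' t a) t := by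
    filter_upwards [hF'] with a ha t ht
    refine (ha t (hIcc (Ioo_subset_Icc_self ht))).congr_of_eventuallyEq ?_
    filter_upwards [Ioo_mem_nhds ht.1 ht.2] with u hu
    rw [hGF u hu]
  have hF'₀_meas : AEStronglyMeasurable (F' θ₀) μ :=
    aestronglyMeasurable_of_hasDerivAt (F := fun a t => G t a) (τ := fun _ => θ₀)
      (fun _ => hG_meas _) (hG'.mono fun a ha => ha θ₀ hθ₀)
  have hI : I ∈ 𝓝 θ₀ := Ioo_mem_nhds hθ₀.1 hθ₀.2
  refine (hasDerivAt_integral_of_dominated_loc_of_lip hI (Eventually.of_forall hG_meas)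
    (hGF θ₀ hθ₀ ▸ hF_int) hF'₀_meas
    (ae_lipschitzOnWith_of_forall_ae_norm_deriv_le ordConnected_Ioo hG hG'
      (fun t ht => h_bound t (hIcc (Ioo_subset_Icc_self ht))) bound_integrable.aemeasurable)
    bound_integrable (hG'.mono fun a ha => ha θ₀ hθ₀)).2.congr_of_eventuallyEq ?_
  filter_upwards [hI] with θ hθ
  rw [hGF θ hθ]

theorem grad_log_partition_general
    {P : Type*} [MeasurableSpace P] (μ : Measure P)
    (x x' : ℝ → P → ℝ) (θ₀ ε : ℝ) (hε : 0 < ε)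
    (hint : ∀ θ ∈ Metric.ball θ₀ ε, Integrable (fun p => Real.exp (x θ p)) μ)
    (hderiv : ∀ᵐ p ∂μ, ∀ θ ∈ Metric.ball θ₀ ε,
      HasDerivAt (fun θ' => x θ' p) (x' θ p) θ)
    (g : P → ℝ) (hg : Integrable g μ)
    (hbound : ∀ θ ∈ Metric.ball θ₀ ε,
      ∀ᵐ p ∂μ, |x' θ p * Real.exp (x θ p)| ≤ g p)
    (hZ : 0 < ∫ p, Real.exp (x θ₀ p) ∂μ) :
    HasDerivAt (fun θ => Real.log (∫ p, Real.exp (x θ p) ∂μ))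
      (∫ p, x' θ₀ p * (Real.exp (x θ₀ p) / (∫ q, Real.exp (x θ₀ q) ∂μ)) ∂μ)
      θ₀ := by
  have hθ₀ : θ₀ ∈ Metric.ball θ₀ ε := Metric.mem_ball_self hε
  have : SigmaFinite μ := sigmaFinite_of_integrable_of_ae_ne_zero (hint θ₀ hθ₀)
    (ae_of_all _ fun p => (exp_pos _).ne')
  have hZ' :
      HasDerivAt (fun θ => ∫ p, exp (x θ p) ∂μ) (∫ p, x' θ₀ p * exp (x θ₀ p) ∂μ) θ₀ :=
    hasDerivAt_integral_of_dominated_loc_of_forall_ae_deriv_le hε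
      (fun θ hθ => (hint θ hθ).aestronglyMeasurable) (hint θ₀ hθ₀)
      (hderiv.mono fun p hp θ hθ => by simpa only [mul_comm] using (hp θ hθ).exp) hbound hg
  convert hZ'.log hZ.ne' using 1
  simp_rw [mul_div_assoc']
  exact integral_div _ _

/-- **Gradient of the log partition function.**
For a parameterized family of scores `x θ p` with partition function
`Z θ = ∫ exp (x θ p) dμ p`, under a dominated-derivative hypothesis the map
`θ ↦ log (Z θ)` is differentiable at `θ₀` with derivative
`∫ ∂x/∂θ(θ₀, p) · q̂ p dμ p`, where `q̂ p = exp (x θ₀ p) / Z θ₀`. -/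
theorem grad_log_partition
    {P : Type*} [MeasurableSpace P] (μ : Measure P)
    (x x' : ℝ → P → ℝ) (θ₀ ε : ℝ) (hε : 0 < ε)
    (hint : ∀ θ ∈ Metric.ball θ₀ ε, Integrable (fun p => Real.exp (x θ p)) μ)
    (hderiv : ∀ᵐ p ∂μ, ∀ θ ∈ Metric.ball θ₀ ε,
      HasDerivAt (fun θ' => x θ' p) (x' θ p) θ)
    (g : P → ℝ) (hg : Integrable g μ)
    (hbound : ∀ θ ∈ Metric.ball θ₀ ε,
      ∀ᵐ p ∂μ, |x' θ p * Real.exp (x θ p)| ≤ g p)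
    (hmeas : AEStronglyMeasurable (fun p => x' θ₀ p * Real.exp (x θ₀ p)) μ)
    (hZ : 0 < ∫ p, Real.exp (x θ₀ p) ∂μ) :
    HasDerivAt (fun θ => Real.log (∫ p, Real.exp (x θ p) ∂μ))
      (∫ p, x' θ₀ p * (Real.exp (x θ₀ p) / (∫ q, Real.exp (x θ₀ q) ∂μ)) ∂μ)
      θ₀ :=
  grad_log_partition_general μ x x' θ₀ ε hε hint hderiv g hg hbound hZ
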